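/- Let p be an odd prime and D > 0 a nonsquare integer which is a nonzero square modulo p; fix a square root √D ∈ ℚ_p. Then: (i) every Heegner form Q = [a,b,c] of discriminant D has p ∤ b, and (γ_Q·e₀) = +1 if and only if v_p(b − √D) ≥ 1, while (γ_Q·e₀) = −1 if and only if v_p(b + √D) ≥ 1; (ii) consequently, for every odd k ≥ 3 and every z in the complex upper half-plane, f_{k,D}^{(p)}(z) = 2·Σ_Q Q(z,1)^{−k}, where the sum is over all Heegner forms Q = [a,b,c] of discriminant D with v_p(b − √D) ≥ 1. -/

import Mathlib

open Complex

/-- Heegner forms of discriminant `D` and level `p`: integral binary quadratic forms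
`[a,b,c]` with `b² − 4ac = D` and `p ∣ a`. -/
def HeegnerForm (p : ℕ) (D : ℤ) : Type :=
  {Q : ℤ × ℤ × ℤ // Q.2.1 ^ 2 - 4 * Q.1 * Q.2.2 = D ∧ (p : ℤ) ∣ Q.1}

/-- The first `p`-adic root `ρ₁ = (−b + √D)/(2a)` of a form `[a,b,c]`,
for a fixed square root `sq` of `D` in `ℚ_p`. -/
noncomputable def padicRoot₁ (p : ℕ) [Fact p.Prime] (sq : ℚ_[p]) (Q : ℤ × ℤ × ℤ) : ℚ_[p] :=
  ((-Q.2.1 : ℤ) + sq) / (2 * (Q.1 : ℚ_[p]))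

/-- The second `p`-adic root `ρ₂ = (−b − √D)/(2a)` of a form `[a,b,c]`. -/
noncomputable def padicRoot₂ (p : ℕ) [Fact p.Prime] (sq : ℚ_[p]) (Q : ℤ × ℤ × ℤ) : ℚ_[p] :=
  ((-Q.2.1 : ℤ) - sq) / (2 * (Q.1 : ℚ_[p]))

/-- The `p`-adic intersection number `(γ_Q · e₀) ∈ {±1}`: it is `+1` if
`v_p(ρ₁) ≥ 0` and `v_p(ρ₂) ≤ −1`, and `−1` otherwise (for Heegner forms the
remaining case is `v_p(ρ₁) ≤ −1`, `v_p(ρ₂) ≥ 0`). -/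
noncomputable def gQe0 (p : ℕ) [Fact p.Prime] (sq : ℚ_[p]) (Q : ℤ × ℤ × ℤ) : ℤ :=
  if 0 ≤ (padicRoot₁ p sq Q).valuation ∧ (padicRoot₂ p sq Q).valuation ≤ -1 then 1 else -1

/-!
Write `u = b - √D` and `w = b + √D`, so that `u w = 4ac` and `u + w = 2b`. Since `p ∣ a` and
`p ∤ D = b² - 4ac`, also `p ∤ b`; thus `u` and `w` are `p`-adic integers whose sum is a unit, so
exactly one of them is a unit and the other has valuation `v(a) + v(c) ≥ v(a) ≥ 1`. As
`ρ₁ = -u/(2a)` and `ρ₂ = -w/(2a)`, this reads `(γ_Q·e₀)` off `v(u)`.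

The involution `Q ↦ -Q` replaces `u` by `-w`, so it flips the sign of `(γ_Q·e₀)` and, for odd
`k`, of `Q(z,1)^{-k}`: it matches each form with `v(u) ≥ 1` with one with `v(u) = 0` contributing
the same summand.
-/

theorem tsum_eq_two_nsmul_tsum_subtype_of_involutive {α M : Type*} [AddCommGroup M]
    [UniformSpace M] [IsUniformAddGroup M] [CompleteSpace M] [T2Space M] {σ : α → α}
    (hσ : Function.Involutive σ) {P : α → Prop} (hP : ∀ x, P (σ x) ↔ ¬ P x) {f : α → M}
    (hf : ∀ x, f (σ x) = f x) :
    ∑' x, f x = 2 • ∑' x : {x // P x}, f x := by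
  let e : {x // ¬ P x} ≃ {x // P x} := (hσ.toPerm σ).subtypeEquiv fun x => (hP x).symm
  by_cases hsum : Summable fun x : {x // P x} => f x
  · have hsum' : Summable fun x : {x // ¬ P x} => f x :=
      (e.summable_iff.2 hsum).congr fun x => hf x
    have hcompl : ∑' x : {x // ¬ P x}, f x = ∑' x : {x // P x}, f x := by
      rw [← e.tsum_eq]
      exact tsum_congr fun x => (hf x).symm
    rw [← Summable.tsum_add_tsum_compl (s := {x | P x}) hsum hsum', two_nsmul]
    exact congrArg _ hcompl
  · have hf' : ¬ Summable f := fun h => hsum (h.subtype P)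
    rw [tsum_eq_zero_of_not_summable hf', tsum_eq_zero_of_not_summable hsum, smul_zero]

namespace Padic

variable {p : ℕ} [Fact p.Prime]

theorem valuation_neg (x : ℚ_[p]) : (-x).valuation = x.valuation := by
  have h := valuation_pow (-x) 2
  rw [neg_sq, valuation_pow] at h
  omega

theorem valuation_div {x y : ℚ_[p]} (hx : x ≠ 0) (hy : y ≠ 0) :
    (x / y).valuation = x.valuation - y.valuation := by
  rw [div_eq_mul_inv, valuation_mul hx (inv_ne_zero hy), valuation_inv, sub_eq_add_neg]

theorem valuation_two (hp : p ≠ 2) : (2 : ℚ_[p]).valuation = 0 := by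
  have hp2 : ¬ p ∣ 2 := fun h => hp ((Nat.prime_dvd_prime_iff_eq Fact.out Nat.prime_two).1 h)
  rw [valuation_ofNat, padicValNat.eq_zero_of_not_dvd hp2, Nat.cast_zero]

theorem valuation_intCast_nonneg (n : ℤ) : 0 ≤ (n : ℚ_[p]).valuation := by
  rw [valuation_intCast]
  exact Int.natCast_nonneg _

theorem valuation_intCast_eq_zero {n : ℤ} (h : ¬ (p : ℤ) ∣ n) : (n : ℚ_[p]).valuation = 0 := by
  rw [valuation_intCast, padicValInt.eq_zero_of_not_dvd h, Nat.cast_zero]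

theorem one_le_valuation_intCast {n : ℤ} (hn : n ≠ 0) (h : (p : ℤ) ∣ n) :
    1 ≤ (n : ℚ_[p]).valuation := by
  rw [valuation_intCast]
  exact_mod_cast ((padicValInt_dvd_iff 1 n).1 (by simpa using h)).resolve_left hn

theorem valuation_eq_zero_of_sq_eq_intCast {x : ℚ_[p]} {n : ℤ} (hx : x ^ 2 = n)
    (h : ¬ (p : ℤ) ∣ n) : x.valuation = 0 := by
  have h2 := valuation_pow x 2
  rw [hx, valuation_intCast_eq_zero h] at h2
  omega

theorem valuation_add_nonneg {x y : ℚ_[p]} (hx : 0 ≤ x.valuation) (hy : 0 ≤ y.valuation)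
    (hxy : x + y ≠ 0) : 0 ≤ (x + y).valuation :=
  (le_min hx hy).trans (le_valuation_add hxy)

end Padic

section Discriminant

variable {R : Type*} [CommRing R] {a b c D : R}

theorem not_dvd_of_sq_sub_mul_eq {p : R} (hpD : ¬ p ∣ D) (hdisc : b ^ 2 - 4 * a * c = D)
    (hpa : p ∣ a) : ¬ p ∣ b := fun hpb =>
  hpD (hdisc ▸ dvd_sub (dvd_pow hpb two_ne_zero) ((hpa.mul_left 4).mul_right c))

theorem ne_zero_of_sq_sub_mul_eq (hD : ¬ IsSquare D) (hdisc : b ^ 2 - 4 * a * c = D) :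
    a ≠ 0 := by
  rintro rfl
  exact hD ⟨b, by rw [← hdisc]; ring⟩

end Discriminant

section SquareRoot

variable {K : Type*} [Ring K] [CharZero K] {D : ℤ} {s : K}

theorem intCast_sub_ne_zero_of_sq_eq (hD : ¬ IsSquare D) (hs : s ^ 2 = D) (b : ℤ) :
    (b : K) - s ≠ 0 := by
  rw [sub_ne_zero]
  rintro rfl
  exact hD ⟨b, by rw [← sq]; exact_mod_cast hs.symm⟩

theorem intCast_add_ne_zero_of_sq_eq (hD : ¬ IsSquare D) (hs : s ^ 2 = D) (b : ℤ) :
    (b : K) + s ≠ 0 := by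
  rw [← sub_neg_eq_add]
  exact intCast_sub_ne_zero_of_sq_eq hD (by rwa [neg_sq]) b

end SquareRoot

open Padic

section HeegnerValuations

variable {p : ℕ} [Fact p.Prime] {D : ℤ} {sq : ℚ_[p]} {a b c : ℤ}

theorem valuation_sub_sqrt_add_valuation_add_sqrt (hp : p ≠ 2) (hD : ¬ IsSquare D)
    (hsq : sq ^ 2 = D) (hdisc : b ^ 2 - 4 * a * c = D) :
    ((b : ℚ_[p]) - sq).valuation + ((b : ℚ_[p]) + sq).valuation =
      (a : ℚ_[p]).valuation + (c : ℚ_[p]).valuation := by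
  have hu := intCast_sub_ne_zero_of_sq_eq hD hsq b
  have hw := intCast_add_ne_zero_of_sq_eq hD hsq b
  have hprod : ((b : ℚ_[p]) - sq) * (b + sq) = 2 * 2 * a * c := by
    have h := congrArg (Int.cast : ℤ → ℚ_[p]) hdisc
    push_cast at h
    linear_combination h - hsq
  obtain ⟨h4a, hc⟩ := mul_ne_zero_iff.1 (hprod ▸ mul_ne_zero hu hw)
  obtain ⟨h4, ha⟩ := mul_ne_zero_iff.1 h4a
  rw [← valuation_mul hu hw, hprod, valuation_mul h4a hc, valuation_mul h4 ha,
    valuation_mul two_ne_zero two_ne_zero, valuation_two hp]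
  ring

theorem valuation_sub_sqrt_eq_zero_or (hp : p ≠ 2) (hD : ¬ IsSquare D)
    (hpD : ¬ (p : ℤ) ∣ D) (hsq : sq ^ 2 = D) (hpb : ¬ (p : ℤ) ∣ b) :
    ((b : ℚ_[p]) - sq).valuation = 0 ∨ ((b : ℚ_[p]) + sq).valuation = 0 := by
  have hb := valuation_intCast_eq_zero hpb
  have hs := valuation_eq_zero_of_sq_eq_intCast hsq hpD
  have hu : 0 ≤ ((b : ℚ_[p]) - sq).valuation := by
    have hne := intCast_sub_ne_zero_of_sq_eq hD hsq b
    rw [sub_eq_add_neg] at hne ⊢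
    exact valuation_add_nonneg hb.ge (by rw [valuation_neg, hs]) hne
  have hw : 0 ≤ ((b : ℚ_[p]) + sq).valuation :=
    valuation_add_nonneg hb.ge hs.ge (intCast_add_ne_zero_of_sq_eq hD hsq b)
  have hsum : ((b : ℚ_[p]) - sq) + (b + sq) = 2 * b := by ring
  have h2b : (2 * b : ℚ_[p]) ≠ 0 :=
    mul_ne_zero two_ne_zero (Int.cast_ne_zero.2 fun h => hpb (h ▸ dvd_zero _))
  have hmin := le_valuation_add (hsum ▸ h2b)
  rw [hsum, valuation_mul two_ne_zero (right_ne_zero_of_mul h2b), valuation_two hp, hb] at hmin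
  omega

end HeegnerValuations

section Roots

variable {p : ℕ} [Fact p.Prime] {sq : ℚ_[p]}

theorem valuation_two_mul_intCast (hp : p ≠ 2) {a : ℤ} (ha : a ≠ 0) :
    (2 * (a : ℚ_[p])).valuation = (a : ℚ_[p]).valuation := by
  rw [valuation_mul two_ne_zero (Int.cast_ne_zero.2 ha), valuation_two hp, zero_add]

theorem valuation_padicRoot₁ (hp : p ≠ 2) {Q : ℤ × ℤ × ℤ} (ha : Q.1 ≠ 0)
    (hu : (Q.2.1 : ℚ_[p]) - sq ≠ 0) :
    (padicRoot₁ p sq Q).valuation =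
      ((Q.2.1 : ℚ_[p]) - sq).valuation - (Q.1 : ℚ_[p]).valuation := by
  have hnum : ((-Q.2.1 : ℤ) : ℚ_[p]) + sq = -((Q.2.1 : ℚ_[p]) - sq) := by push_cast; ring
  rw [padicRoot₁, hnum, valuation_div (neg_ne_zero.2 hu)
    (mul_ne_zero two_ne_zero (Int.cast_ne_zero.2 ha)), valuation_neg,
    valuation_two_mul_intCast hp ha]

theorem valuation_padicRoot₂ (hp : p ≠ 2) {Q : ℤ × ℤ × ℤ} (ha : Q.1 ≠ 0)
    (hw : (Q.2.1 : ℚ_[p]) + sq ≠ 0) :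
    (padicRoot₂ p sq Q).valuation =
      ((Q.2.1 : ℚ_[p]) + sq).valuation - (Q.1 : ℚ_[p]).valuation := by
  have hnum : ((-Q.2.1 : ℤ) : ℚ_[p]) - sq = -((Q.2.1 : ℚ_[p]) + sq) := by push_cast; ring
  rw [padicRoot₂, hnum, valuation_div (neg_ne_zero.2 hw)
    (mul_ne_zero two_ne_zero (Int.cast_ne_zero.2 ha)), valuation_neg,
    valuation_two_mul_intCast hp ha]

theorem gQe0_eq_one_or_eq_neg_one (Q : ℤ × ℤ × ℤ) :
    gQe0 p sq Q = 1 ∨ gQe0 p sq Q = -1 := by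
  unfold gQe0
  split_ifs <;> simp

end Roots

namespace HeegnerForm

variable {p : ℕ} {D : ℤ}

instance : InvolutiveNeg (HeegnerForm p D) where
  neg Q := ⟨-Q.1, by simpa using Q.2.1, dvd_neg.2 Q.2.2⟩
  neg_neg Q := Subtype.ext (neg_neg Q.1)

@[simp]
theorem coe_neg (Q : HeegnerForm p D) : (-Q).1 = -Q.1 := rfl

def eval (Q : HeegnerForm p D) (z : ℂ) : ℂ :=
  Q.1.1 * z ^ 2 + Q.1.2.1 * z + Q.1.2.2

theorem eval_neg (Q : HeegnerForm p D) (z : ℂ) : (-Q).eval z = -Q.eval z := by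
  simp only [eval, coe_neg, Prod.fst_neg, Prod.snd_neg, Int.cast_neg]
  ring

theorem not_dvd_b (hpD : ¬ (p : ℤ) ∣ D) (Q : HeegnerForm p D) : ¬ (p : ℤ) ∣ Q.1.2.1 :=
  not_dvd_of_sq_sub_mul_eq hpD Q.2.1 Q.2.2

variable [Fact p.Prime] {sq : ℚ_[p]}

theorem valuation_sub_sqrt_cases (hp : p ≠ 2) (hD : ¬ IsSquare D) (hpD : ¬ (p : ℤ) ∣ D)
    (hsq : sq ^ 2 = D) (Q : HeegnerForm p D) :
    1 ≤ (Q.1.1 : ℚ_[p]).valuation ∧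
    ((((Q.1.2.1 : ℚ_[p]) - sq).valuation = 0 ∧
        (Q.1.1 : ℚ_[p]).valuation ≤ ((Q.1.2.1 : ℚ_[p]) + sq).valuation) ∨
      (((Q.1.2.1 : ℚ_[p]) + sq).valuation = 0 ∧
        (Q.1.1 : ℚ_[p]).valuation ≤ ((Q.1.2.1 : ℚ_[p]) - sq).valuation)) := by
  have hsum := valuation_sub_sqrt_add_valuation_add_sqrt hp hD hsq Q.2.1
  have hc := valuation_intCast_nonneg (p := p) Q.1.2.2
  refine ⟨one_le_valuation_intCast (ne_zero_of_sq_sub_mul_eq hD Q.2.1) Q.2.2, ?_⟩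
  rcases valuation_sub_sqrt_eq_zero_or hp hD hpD hsq (not_dvd_b hpD Q) with h | h <;> omega

theorem gQe0_eq_ite (hp : p ≠ 2) (hD : ¬ IsSquare D) (hpD : ¬ (p : ℤ) ∣ D)
    (hsq : sq ^ 2 = D) (Q : HeegnerForm p D) :
    gQe0 p sq Q.1 = if 1 ≤ ((Q.1.2.1 : ℚ_[p]) - sq).valuation then 1 else -1 := by
  have hcases := valuation_sub_sqrt_cases hp hD hpD hsq Q
  have ha := ne_zero_of_sq_sub_mul_eq hD Q.2.1
  rw [gQe0, valuation_padicRoot₁ hp ha (intCast_sub_ne_zero_of_sq_eq hD hsq _),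
    valuation_padicRoot₂ hp ha (intCast_add_ne_zero_of_sq_eq hD hsq _)]
  congr 1
  apply propext
  omega

theorem gQe0_eq_one_iff (hp : p ≠ 2) (hD : ¬ IsSquare D) (hpD : ¬ (p : ℤ) ∣ D)
    (hsq : sq ^ 2 = D) (Q : HeegnerForm p D) :
    gQe0 p sq Q.1 = 1 ↔ 1 ≤ ((Q.1.2.1 : ℚ_[p]) - sq).valuation := by
  rw [gQe0_eq_ite hp hD hpD hsq]
  split_ifs with h <;> simp [h]

theorem gQe0_eq_neg_one_iff (hp : p ≠ 2) (hD : ¬ IsSquare D) (hpD : ¬ (p : ℤ) ∣ D)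
    (hsq : sq ^ 2 = D) (Q : HeegnerForm p D) :
    gQe0 p sq Q.1 = -1 ↔ 1 ≤ ((Q.1.2.1 : ℚ_[p]) + sq).valuation := by
  rw [gQe0_eq_ite hp hD hpD hsq]
  obtain ⟨ha, ⟨hu, hw⟩ | ⟨hw, hu⟩⟩ := valuation_sub_sqrt_cases hp hD hpD hsq Q <;>
    split_ifs <;> simp <;> omega

theorem gQe0_neg (hp : p ≠ 2) (hD : ¬ IsSquare D) (hpD : ¬ (p : ℤ) ∣ D)
    (hsq : sq ^ 2 = D) (Q : HeegnerForm p D) :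
    gQe0 p sq (-Q).1 = -gQe0 p sq Q.1 := by
  have hneg : (((-Q).1.2.1 : ℤ) : ℚ_[p]) - sq = -((Q.1.2.1 : ℚ_[p]) + sq) := by
    simp only [coe_neg, Prod.snd_neg, Prod.fst_neg, Int.cast_neg]
    ring
  have := valuation_sub_sqrt_cases hp hD hpD hsq Q
  rw [gQe0_eq_ite hp hD hpD hsq, gQe0_eq_ite hp hD hpD hsq, hneg, valuation_neg]
  split_ifs <;> omega

end HeegnerForm

open HeegnerForm

theorem stmt17_general (p : ℕ) [Fact p.Prime] (hp : p ≠ 2)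
    (D : ℤ) (hDns : ¬ IsSquare D)
    (hDp : IsSquare (D : ZMod p) ∧ (D : ZMod p) ≠ 0)
    (sq : ℚ_[p]) (hsq : sq ^ 2 = (D : ℚ_[p])) :
    (∀ Q : HeegnerForm p D,
      ¬ (p : ℤ) ∣ Q.1.2.1 ∧
      (gQe0 p sq Q.1 = 1 ↔ 1 ≤ ((Q.1.2.1 : ℚ_[p]) - sq).valuation) ∧
      (gQe0 p sq Q.1 = -1 ↔ 1 ≤ ((Q.1.2.1 : ℚ_[p]) + sq).valuation)) ∧
    (∀ k : ℕ, Odd k → 3 ≤ k → ∀ z : ℂ, 0 < z.im →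
      (∑' Q : HeegnerForm p D,
          ((gQe0 p sq Q.1 : ℤ) : ℂ) *
            ((Q.1.1 : ℂ) * z ^ 2 + (Q.1.2.1 : ℂ) * z + (Q.1.2.2 : ℂ)) ^ (-(k : ℤ))) =
        2 * ∑' Q : {Q : HeegnerForm p D // 1 ≤ ((Q.1.2.1 : ℚ_[p]) - sq).valuation},
          ((Q.1.1.1 : ℂ) * z ^ 2 + (Q.1.1.2.1 : ℂ) * z + (Q.1.1.2.2 : ℂ)) ^ (-(k : ℤ))) := by
  have hpD : ¬ (p : ℤ) ∣ D := fun h => hDp.2 ((ZMod.intCast_zmod_eq_zero_iff_dvd D p).2 h)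
  refine ⟨fun Q => ⟨not_dvd_b hpD Q, gQe0_eq_one_iff hp hDns hpD hsq Q,
    gQe0_eq_neg_one_iff hp hDns hpD hsq Q⟩, fun k hk _ z _ => ?_⟩
  have hsummand (Q : HeegnerForm p D) :
      (gQe0 p sq (-Q).1 : ℂ) * (-Q).eval z ^ (-(k : ℤ)) =
        (gQe0 p sq Q.1 : ℂ) * Q.eval z ^ (-(k : ℤ)) := by
    rw [gQe0_neg hp hDns hpD hsq, eval_neg, (Int.odd_coe_nat k |>.2 hk).neg.neg_zpow]
    push_cast
    ring
  have hmem (Q : HeegnerForm p D) : 1 ≤ (((-Q).1.2.1 : ℚ_[p]) - sq).valuation ↔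
      ¬ 1 ≤ ((Q.1.2.1 : ℚ_[p]) - sq).valuation := by
    rw [← gQe0_eq_one_iff hp hDns hpD hsq, ← gQe0_eq_one_iff hp hDns hpD hsq,
      gQe0_neg hp hDns hpD hsq]
    have := gQe0_eq_one_or_eq_neg_one (sq := sq) Q.1
    omega
  rw [tsum_eq_two_nsmul_tsum_subtype_of_involutive neg_involutive
    (P := fun Q : HeegnerForm p D => 1 ≤ ((Q.1.2.1 : ℚ_[p]) - sq).valuation) hmem hsummand,
    nsmul_eq_mul, Nat.cast_ofNat]
  congr 1
  refine tsum_congr fun Q => ?_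
  rw [(gQe0_eq_one_iff hp hDns hpD hsq Q.1).2 Q.2, Int.cast_one, one_mul]

/-- Let `p` be an odd prime and `D > 0` a nonsquare integer which is a
nonzero square modulo `p`; fix `√D ∈ ℚ_p`.  Then: (i) every Heegner form `[a,b,c]` of
discriminant `D` has `p ∤ b`, and `(γ_Q·e₀) = +1 ↔ v_p(b − √D) ≥ 1`, while
`(γ_Q·e₀) = −1 ↔ v_p(b + √D) ≥ 1`; (ii) consequently, for every odd `k ≥ 3` and every
`z` in the complex upper half-plane,
`f_{k,D}^{(p)}(z) = 2·Σ_{Q : v_p(b−√D) ≥ 1} Q(z,1)^{−k}`. -/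
theorem stmt17 (p : ℕ) [Fact p.Prime] (hp : p ≠ 2)
    (D : ℤ) (hD : 0 < D) (hDns : ¬ IsSquare D)
    (hDp : IsSquare (D : ZMod p) ∧ (D : ZMod p) ≠ 0)
    (sq : ℚ_[p]) (hsq : sq ^ 2 = (D : ℚ_[p])) :
    (∀ Q : HeegnerForm p D,
      ¬ (p : ℤ) ∣ Q.1.2.1 ∧
      (gQe0 p sq Q.1 = 1 ↔ 1 ≤ ((Q.1.2.1 : ℚ_[p]) - sq).valuation) ∧
      (gQe0 p sq Q.1 = -1 ↔ 1 ≤ ((Q.1.2.1 : ℚ_[p]) + sq).valuation)) ∧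
    (∀ k : ℕ, Odd k → 3 ≤ k → ∀ z : ℂ, 0 < z.im →
      (∑' Q : HeegnerForm p D,
          ((gQe0 p sq Q.1 : ℤ) : ℂ) *
            ((Q.1.1 : ℂ) * z ^ 2 + (Q.1.2.1 : ℂ) * z + (Q.1.2.2 : ℂ)) ^ (-(k : ℤ))) =
        2 * ∑' Q : {Q : HeegnerForm p D // 1 ≤ ((Q.1.2.1 : ℚ_[p]) - sq).valuation},
          ((Q.1.1.1 : ℂ) * z ^ 2 + (Q.1.1.2.1 : ℂ) * z + (Q.1.1.2.2 : ℂ)) ^ (-(k : ℤ))) :=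
  stmt17_general p hp D hDns hDp sq hsq
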